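/- arXiv:1510.06060 — 3 statements merged into one kernel-verified Lean document; each statement's English description precedes it below -/
import Mathlib

section
/- If D is a staircase diagram over a graph and B, B' ∈ D are distinct blocks, then B is not a subset of B'. -/
/-- A staircase diagram over a graph `G`: a poset of nonempty connected blocks of
vertices satisfying the four axioms of Richmond–Slofstra. -/
structure StaircaseDiagram {V : Type*} (G : SimpleGraph V) where
  blocks : Set (Set V)
  le : Set V → Set V → Prop
  le_refl : ∀ B ∈ blocks, le B B
  le_trans : ∀ A ∈ blocks, ∀ B ∈ blocks, ∀ C ∈ blocks, le A B → le B C → le A C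
  le_antisymm : ∀ A ∈ blocks, ∀ B ∈ blocks, le A B → le B A → A = B
  nonempty : ∀ B ∈ blocks, B.Nonempty
  conn : ∀ B ∈ blocks, (G.induce B).Connected
  /-- (1) if `B` covers `B'` then `B ∪ B'` is connected -/
  cover_conn : ∀ B ∈ blocks, ∀ B' ∈ blocks,
    (le B' B ∧ B' ≠ B ∧ ¬ ∃ C ∈ blocks, (le B' C ∧ B' ≠ C) ∧ (le C B ∧ C ≠ B)) →
    (G.induce (B ∪ B')).Connected
  /-- (2) each `D_s` is a chain -/
  chain_vertex : ∀ s : V, ∀ B ∈ blocks, ∀ B' ∈ blocks, s ∈ B → s ∈ B' →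
    le B B' ∨ le B' B
  /-- (3a) for adjacent `s, t`, `D_s ∪ D_t` is a chain -/
  chain_adj : ∀ s t : V, G.Adj s t → ∀ B ∈ blocks, ∀ B' ∈ blocks,
    (s ∈ B ∨ t ∈ B) → (s ∈ B' ∨ t ∈ B') → le B B' ∨ le B' B
  /-- (3b) `D_s` is a saturated subchain of `D_s ∪ D_t` -/
  saturated_adj : ∀ s t : V, G.Adj s t → ∀ A ∈ blocks, ∀ B ∈ blocks, ∀ C ∈ blocks,
    s ∈ A → s ∈ B → (s ∈ C ∨ t ∈ C) →
    le A C → A ≠ C → le C B → C ≠ B → s ∈ C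
  /-- (4) every block is the minimum of some `D_s` ... -/
  min_exists : ∀ B ∈ blocks, ∃ s ∈ B, ∀ B' ∈ blocks, s ∈ B' → le B B'
  /-- (4) ... and the maximum of some `D_{s'}` -/
  max_exists : ∀ B ∈ blocks, ∃ s ∈ B, ∀ B' ∈ blocks, s ∈ B' → le B' B

namespace StaircaseDiagram

variable {V : Type*} {G : SimpleGraph V} (D : StaircaseDiagram G)

/-- The support of a staircase diagram. -/
def support : Set V := ⋃ B ∈ D.blocks, B

/-- A staircase diagram is fully supported if every vertex lies in some block. -/
def FullySupported : Prop := D.support = Set.univ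

/-- `s` is a critical point if exactly one block contains `s`. -/
def IsCritical (s : V) : Prop :=
  (∃ B ∈ D.blocks, s ∈ B) ∧ {B ∈ D.blocks | s ∈ B}.Subsingleton

/-- `s` is a leaf of the support: it lies in the support and has at most one
neighbour in the support. -/
def IsSupportLeaf (s : V) : Prop :=
  s ∈ D.support ∧ {t | t ∈ D.support ∧ G.Adj s t}.Subsingleton

/-- A staircase diagram is elementary if all its critical points are leaves of
its support. -/
def Elementary : Prop := ∀ s : V, D.IsCritical s → D.IsSupportLeaf s

/-- A staircase diagram is a chain if any two blocks are comparable. -/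
def IsChainDiagram : Prop :=
  ∀ B ∈ D.blocks, ∀ B' ∈ D.blocks, D.le B B' ∨ D.le B' B

end StaircaseDiagram

/-- distinct blocks of a staircase diagram are incomparable under
inclusion. -/
theorem StaircaseDiagram.not_subset_of_ne {V : Type*} {G : SimpleGraph V}
    (D : StaircaseDiagram G) {B B' : Set V} (hB : B ∈ D.blocks)
    (hB' : B' ∈ D.blocks) (hne : B ≠ B') : ¬ B ⊆ B' := by
  intro hsub
  obtain ⟨s, hsB, hmin⟩ := D.min_exists B hB
  obtain ⟨t, htB, hmax⟩ := D.max_exists B hB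
  exact hne (D.le_antisymm B hB B' hB' (hmin B' hB' (hsub hsB)) (hmax B' hB' (hsub htB)))
end

section
/- Every fully supported elementary staircase diagram over the path graph A_n is a chain (totally ordered). -/
private lemma exists_rel_top {α : Type*} (r : α → α → Prop) (s : Finset α) :
    (∀ x ∈ s, r x x) →
    (∀ x ∈ s, ∀ y ∈ s, ∀ z ∈ s, r x y → r y z → r x z) →
    (∀ x ∈ s, ∀ y ∈ s, r x y ∨ r y x) →
    s.Nonempty → ∃ m ∈ s, ∀ x ∈ s, r x m := by
  induction s using Finset.cons_induction with
  | empty => intro _ _ _ h; exact absurd h (by simp)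
  | cons a t ha ih =>
    intro hrefl htrans htot _
    rcases t.eq_empty_or_nonempty with rfl | htne
    · refine ⟨a, by simp, fun x hx => ?_⟩
      have hxa : x = a := by simpa using hx
      subst hxa
      exact hrefl x (by simp)
    · obtain ⟨m, hm, hmax⟩ := ih
        (fun x hx => hrefl x (Finset.mem_cons_of_mem hx))
        (fun x hx y hy z hz => htrans x (Finset.mem_cons_of_mem hx) y
          (Finset.mem_cons_of_mem hy) z (Finset.mem_cons_of_mem hz))
        (fun x hx y hy => htot x (Finset.mem_cons_of_mem hx) y (Finset.mem_cons_of_mem hy)) htne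
      have hms : m ∈ Finset.cons a t ha := Finset.mem_cons_of_mem hm
      have has : a ∈ Finset.cons a t ha := Finset.mem_cons_self a t
      rcases htot a has m hms with h | h
      · refine ⟨m, hms, fun x hx => ?_⟩
        rcases Finset.mem_cons.1 hx with hxa | hx'
        · subst hxa; exact h
        · exact hmax x hx'
      · refine ⟨a, has, fun x hx => ?_⟩
        rcases Finset.mem_cons.1 hx with hxa | hx'
        · subst hxa; exact hrefl x hx
        · exact htrans x hx m hms a has (hmax x hx') h

private lemma path_walk_interval {n : ℕ} {B : Set (Fin n)}
    {x y : ↥B} (p : ((SimpleGraph.pathGraph n).induce B).Walk x y) :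
    ∀ c : Fin n, (x : Fin n) ≤ c → c ≤ (y : Fin n) → c ∈ B := by
  induction p with
  | @nil u =>
    intro c h1 h2
    have : c = (u : Fin n) := le_antisymm h2 h1
    exact this ▸ u.2
  | @cons u v w h q ih =>
    intro c h1 h2
    by_cases hc : (v : Fin n) ≤ c
    · exact ih c hc h2
    · have hadj : (SimpleGraph.pathGraph n).Adj (u : Fin n) (v : Fin n) := h
      rw [SimpleGraph.pathGraph_adj] at hadj
      have h1' : (u : Fin n).val ≤ c.val := h1
      have hc' : ¬ ((v : Fin n).val ≤ c.val) := fun hh => hc hh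
      have : c = (u : Fin n) := by
        apply Fin.ext
        omega
      exact this ▸ u.2

private lemma block_icc {n : ℕ} {B : Set (Fin n)}
    (hconn : ((SimpleGraph.pathGraph n).induce B).Connected) (hne : B.Nonempty) :
    ∃ a b : Fin n, a ≤ b ∧ B = Set.Icc a b := by
  have hfin : B.Finite := Set.toFinite B
  obtain ⟨x, hx⟩ := hne
  have hsne : hfin.toFinset.Nonempty := ⟨x, hfin.mem_toFinset.2 hx⟩
  set s := hfin.toFinset with hs
  refine ⟨s.min' hsne, s.max' hsne, s.min'_le _ (s.max'_mem hsne), ?_⟩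
  have hmin : s.min' hsne ∈ B := hfin.mem_toFinset.1 (s.min'_mem hsne)
  have hmax : s.max' hsne ∈ B := hfin.mem_toFinset.1 (s.max'_mem hsne)
  ext c
  constructor
  · intro hc
    exact Set.mem_Icc.2 ⟨s.min'_le c (hfin.mem_toFinset.2 hc), s.le_max' c (hfin.mem_toFinset.2 hc)⟩
  · intro hc
    obtain ⟨hc1, hc2⟩ := Set.mem_Icc.1 hc
    exact (hconn.preconnected ⟨_, hmin⟩ ⟨_, hmax⟩).elim
      (fun p => path_walk_interval p c hc1 hc2)

open SimpleGraph in
private def BadPair {n : ℕ} (D : StaircaseDiagram (pathGraph n)) (d : ℕ) : Prop :=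
  ∃ (B B' : Set (Fin n)) (a b a' b' : Fin n),
    B ∈ D.blocks ∧ B' ∈ D.blocks ∧ B = Set.Icc a b ∧ B' = Set.Icc a' b' ∧
    a ≤ b ∧ a' ≤ b' ∧ ¬ D.le B B' ∧ ¬ D.le B' B ∧ b.val < a'.val ∧ d = a'.val - b.val

open SimpleGraph in
private lemma badpair_step {n : ℕ} (D : StaircaseDiagram (pathGraph n))
    (h1 : D.FullySupported) (h2 : D.Elementary) (d : ℕ)
    (hmin : ∀ e < d, ¬ BadPair D e) : ¬ BadPair D d := by
  have h1' : D.support = Set.univ := h1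
  rintro ⟨B, B', a, b, a', b', hBblk, hB'blk, hBeq, hB'eq, hab, ha'b', hnle, hnle', hlt, hdeq⟩
  have hab' : a.val ≤ b.val := hab
  have ha'b'' : a'.val ≤ b'.val := ha'b'
  have hbB : b ∈ B := by rw [hBeq]; exact Set.mem_Icc.2 ⟨hab, le_refl b⟩
  have haB : a ∈ B := by rw [hBeq]; exact Set.mem_Icc.2 ⟨le_refl a, hab⟩
  have ha'B' : a' ∈ B' := by rw [hB'eq]; exact Set.mem_Icc.2 ⟨le_refl a', ha'b'⟩
  have hb'B' : b' ∈ B' := by rw [hB'eq]; exact Set.mem_Icc.2 ⟨ha'b', le_refl b'⟩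
  -- the two blocks are not adjacent
  have hd2 : b.val + 2 ≤ a'.val := by
    by_contra hco
    have hadj : (pathGraph n).Adj b a' := by rw [pathGraph_adj]; left; omega
    rcases D.chain_adj b a' hadj B hBblk B' hB'blk (Or.inl hbB) (Or.inr ha'B') with h | h
    · exact hnle h
    · exact hnle' h
  have ha'n : a'.val < n := a'.isLt
  -- blocks meeting the gap
  let Sset : Set (Set (Fin n)) :=
    {A | A ∈ D.blocks ∧ ∃ w : Fin n, w ∈ A ∧ b.val < w.val ∧ w.val < a'.val}
  -- every gap block is comparable with B
  have comp_B : ∀ A ∈ Sset, D.le A B ∨ D.le B A := by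
    rintro A ⟨hAblk, w, hwA, hw1, hw2⟩
    obtain ⟨α, β, hαβ, hAeq⟩ := block_icc (D.conn A hAblk) (D.nonempty A hAblk)
    have hαβ' : α.val ≤ β.val := hαβ
    have hw' : w ∈ Set.Icc α β := by rw [← hAeq]; exact hwA
    obtain ⟨hwα, hwβ⟩ := Set.mem_Icc.1 hw'
    have hwα' : α.val ≤ w.val := hwα
    have hwβ' : w.val ≤ β.val := hwβ
    by_cases hcase : α.val ≤ b.val
    · have hbA : b ∈ A := by
        rw [hAeq]; exact Set.mem_Icc.2 ⟨Fin.le_def.2 (by omega), Fin.le_def.2 (by omega)⟩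
      exact D.chain_vertex b A hAblk B hBblk hbA hbB
    · by_cases hadj : α.val = b.val + 1
      · have hαA : α ∈ A := by rw [hAeq]; exact Set.mem_Icc.2 ⟨le_refl α, hαβ⟩
        have hadjba : (pathGraph n).Adj b α := by rw [pathGraph_adj]; left; omega
        exact D.chain_adj b α hadjba A hAblk B hBblk (Or.inr hαA) (Or.inl hbB)
      · by_contra hno2
        push_neg at hno2
        exact hmin (α.val - b.val) (by omega)
          ⟨B, A, a, b, α, β, hBblk, hAblk, hBeq, hAeq, hab, hαβ,
            hno2.2, hno2.1, by omega, rfl⟩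
  -- every gap block is comparable with B'
  have comp_B' : ∀ A ∈ Sset, D.le A B' ∨ D.le B' A := by
    rintro A ⟨hAblk, w, hwA, hw1, hw2⟩
    obtain ⟨α, β, hαβ, hAeq⟩ := block_icc (D.conn A hAblk) (D.nonempty A hAblk)
    have hαβ' : α.val ≤ β.val := hαβ
    have hw' : w ∈ Set.Icc α β := by rw [← hAeq]; exact hwA
    obtain ⟨hwα, hwβ⟩ := Set.mem_Icc.1 hw'
    have hwα' : α.val ≤ w.val := hwα
    have hwβ' : w.val ≤ β.val := hwβ
    by_cases hcase : a'.val ≤ β.val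
    · have ha'A : a' ∈ A := by
        rw [hAeq]; exact Set.mem_Icc.2 ⟨Fin.le_def.2 (by omega), Fin.le_def.2 (by omega)⟩
      exact D.chain_vertex a' A hAblk B' hB'blk ha'A ha'B'
    · by_cases hadj : β.val + 1 = a'.val
      · have hβA : β ∈ A := by rw [hAeq]; exact Set.mem_Icc.2 ⟨hαβ, le_refl β⟩
        have hadjba : (pathGraph n).Adj β a' := by rw [pathGraph_adj]; left; omega
        exact D.chain_adj β a' hadjba A hAblk B' hB'blk (Or.inl hβA) (Or.inr ha'B')
      · by_contra hno2
        push_neg at hno2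
        exact hmin (a'.val - β.val) (by omega)
          ⟨A, B', α, β, a', b', hAblk, hB'blk, hAeq, hB'eq, hαβ, ha'b',
            hno2.1, hno2.2, by omega, rfl⟩
  -- gap blocks are distinct from B and B'
  have ne_B : ∀ A ∈ Sset, A ≠ B := by
    rintro A ⟨hAblk, w, hwA, hw1, hw2⟩ hAB
    rw [hAB, hBeq] at hwA
    have : w.val ≤ b.val := (Set.mem_Icc.1 hwA).2
    omega
  have ne_B' : ∀ A ∈ Sset, A ≠ B' := by
    rintro A ⟨hAblk, w, hwA, hw1, hw2⟩ hAB
    rw [hAB, hB'eq] at hwA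
    have : a'.val ≤ w.val := (Set.mem_Icc.1 hwA).1
    omega
  -- gap blocks form a chain
  have step : ∀ (P Q : Set (Fin n)) (αP βP αQ βQ : Fin n), P ∈ D.blocks → Q ∈ D.blocks →
      P = Set.Icc αP βP → Q = Set.Icc αQ βQ → αP ≤ βP → αQ ≤ βQ →
      b.val < βP.val → αQ.val < a'.val → αP.val ≤ αQ.val →
      D.le P Q ∨ D.le Q P := by
    intro P Q αP βP αQ βQ hPblk hQblk hPeq hQeq hP hQ hbP hQa hPQ
    have hP' : αP.val ≤ βP.val := hP
    have hQ' : αQ.val ≤ βQ.val := hQ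
    by_cases h : αQ.val ≤ βP.val
    · have h1m : αQ ∈ P := by
        rw [hPeq]; exact Set.mem_Icc.2 ⟨Fin.le_def.2 (by omega), Fin.le_def.2 (by omega)⟩
      have h2m : αQ ∈ Q := by rw [hQeq]; exact Set.mem_Icc.2 ⟨le_refl αQ, hQ⟩
      exact D.chain_vertex αQ P hPblk Q hQblk h1m h2m
    · by_cases h' : αQ.val = βP.val + 1
      · have h1m : βP ∈ P := by rw [hPeq]; exact Set.mem_Icc.2 ⟨hP, le_refl βP⟩
        have h2m : αQ ∈ Q := by rw [hQeq]; exact Set.mem_Icc.2 ⟨le_refl αQ, hQ⟩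
        have hadjba : (pathGraph n).Adj βP αQ := by rw [pathGraph_adj]; left; omega
        exact D.chain_adj βP αQ hadjba P hPblk Q hQblk (Or.inl h1m) (Or.inr h2m)
      · by_contra hno2
        push_neg at hno2
        exact hmin (αQ.val - βP.val) (by omega)
          ⟨P, Q, αP, βP, αQ, βQ, hPblk, hQblk, hPeq, hQeq, hP, hQ,
            hno2.1, hno2.2, by omega, rfl⟩
  have chain_S : ∀ A₁ ∈ Sset, ∀ A₂ ∈ Sset, D.le A₁ A₂ ∨ D.le A₂ A₁ := by
    rintro A₁ ⟨h1blk, w1, hw1A, hw11, hw12⟩ A₂ ⟨h2blk, w2, hw2A, hw21, hw22⟩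
    obtain ⟨α1, β1, hαβ1, hA1eq⟩ := block_icc (D.conn A₁ h1blk) (D.nonempty A₁ h1blk)
    obtain ⟨α2, β2, hαβ2, hA2eq⟩ := block_icc (D.conn A₂ h2blk) (D.nonempty A₂ h2blk)
    have hw1' : w1 ∈ Set.Icc α1 β1 := by rw [← hA1eq]; exact hw1A
    have hw2' : w2 ∈ Set.Icc α2 β2 := by rw [← hA2eq]; exact hw2A
    have e11 : α1.val ≤ w1.val := (Set.mem_Icc.1 hw1').1
    have e12 : w1.val ≤ β1.val := (Set.mem_Icc.1 hw1').2
    have e21 : α2.val ≤ w2.val := (Set.mem_Icc.1 hw2').1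
    have e22 : w2.val ≤ β2.val := (Set.mem_Icc.1 hw2').2
    by_cases hord : α1.val ≤ α2.val
    · exact step A₁ A₂ α1 β1 α2 β2 h1blk h2blk hA1eq hA2eq hαβ1 hαβ2
        (by omega) (by omega) hord
    · exact (step A₂ A₁ α2 β2 α1 β1 h2blk h1blk hA2eq hA1eq hαβ2 hαβ1
        (by omega) (by omega) (by omega)).symm
  -- Sset is nonempty
  have hbn : b.val + 1 < n := by omega
  have hu : (⟨b.val + 1, hbn⟩ : Fin n) ∈ D.support := by rw [h1']; exact Set.mem_univ _
  obtain ⟨A₀, hA₀blk, hA₀u⟩ := Set.mem_iUnion₂.1 (show _ ∈ ⋃ C ∈ D.blocks, C from hu)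
  have hA₀S : A₀ ∈ Sset :=
    ⟨hA₀blk, ⟨b.val + 1, hbn⟩, hA₀u, by show b.val < b.val + 1; omega,
      by show b.val + 1 < a'.val; omega⟩
  -- criticality contradiction machine
  have crit : ∀ y : Fin n, b.val < y.val → y.val < a'.val →
      ({C | C ∈ D.blocks ∧ y ∈ C}).Subsingleton → False := by
    intro y hy1 hy2 hsub
    have hex : ∃ C ∈ D.blocks, y ∈ C := by
      have hu : y ∈ D.support := by rw [h1']; exact Set.mem_univ _
      obtain ⟨C, hC, hyC⟩ := Set.mem_iUnion₂.1 (show _ ∈ ⋃ C ∈ D.blocks, C from hu)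
      exact ⟨C, hC, hyC⟩
    have hcr : D.IsCritical y := ⟨hex, hsub⟩
    have hleaf : D.IsSupportLeaf y := h2 y hcr
    have hy1' : 1 ≤ y.val := by omega
    have hyn : y.val + 1 < n := by omega
    have hp : (⟨y.val - 1, by omega⟩ : Fin n) ∈ {t | t ∈ D.support ∧ (pathGraph n).Adj y t} := by
      refine ⟨by rw [h1']; exact Set.mem_univ _, ?_⟩
      rw [pathGraph_adj]; right; show y.val - 1 + 1 = y.val; omega
    have hq : (⟨y.val + 1, hyn⟩ : Fin n) ∈ {t | t ∈ D.support ∧ (pathGraph n).Adj y t} := by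
      refine ⟨by rw [h1']; exact Set.mem_univ _, ?_⟩
      rw [pathGraph_adj]; left; rfl
    have heq := hleaf.2 hp hq
    have hval : y.val - 1 = y.val + 1 := congrArg Fin.val heq
    omega
  -- extract the maximum of Sset
  have hSfin : Sset.Finite := Set.toFinite Sset
  obtain ⟨M, hMf, hMtop'⟩ := exists_rel_top D.le hSfin.toFinset
    (fun x hx => D.le_refl x (hSfin.mem_toFinset.1 hx).1)
    (fun x hx y hy z hz hxy hyz => D.le_trans x (hSfin.mem_toFinset.1 hx).1 y
      (hSfin.mem_toFinset.1 hy).1 z (hSfin.mem_toFinset.1 hz).1 hxy hyz)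
    (fun x hx y hy => chain_S x (hSfin.mem_toFinset.1 hx) y (hSfin.mem_toFinset.1 hy))
    ⟨A₀, hSfin.mem_toFinset.2 hA₀S⟩
  have hMS : M ∈ Sset := hSfin.mem_toFinset.1 hMf
  have hMtop : ∀ A ∈ Sset, D.le A M := fun A hA => hMtop' A (hSfin.mem_toFinset.2 hA)
  have hMblk : M ∈ D.blocks := hMS.1
  rcases comp_B M hMS with hMB | hBM
  · -- M is below B : every gap block is below B and B'
    have hMB'le : D.le M B' := by
      rcases comp_B' M hMS with h | h
      · exact h
      · exact absurd (D.le_trans B' hB'blk M hMblk B hBblk h hMB) hnle'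
    have hSB : ∀ A ∈ Sset, D.le A B :=
      fun A hA => D.le_trans A hA.1 M hMblk B hBblk (hMtop A hA) hMB
    have hSB' : ∀ A ∈ Sset, D.le A B' :=
      fun A hA => D.le_trans A hA.1 M hMblk B' hB'blk (hMtop A hA) hMB'le
    -- extract the minimum of Sset
    obtain ⟨N, hNf, hNbot'⟩ := exists_rel_top (fun P Q => D.le Q P) hSfin.toFinset
      (fun x hx => D.le_refl x (hSfin.mem_toFinset.1 hx).1)
      (fun x hx y hy z hz hxy hyz => D.le_trans z (hSfin.mem_toFinset.1 hz).1 y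
        (hSfin.mem_toFinset.1 hy).1 x (hSfin.mem_toFinset.1 hx).1 hyz hxy)
      (fun x hx y hy => (chain_S x (hSfin.mem_toFinset.1 hx) y (hSfin.mem_toFinset.1 hy)).symm)
      ⟨A₀, hSfin.mem_toFinset.2 hA₀S⟩
    have hNS : N ∈ Sset := hSfin.mem_toFinset.1 hNf
    have hNbot : ∀ A ∈ Sset, D.le N A := fun A hA => hNbot' A (hSfin.mem_toFinset.2 hA)
    have hNblk : N ∈ D.blocks := hNS.1
    obtain ⟨y, hyN, hy⟩ := D.max_exists N hNblk
    have hygap : ¬ (b.val < y.val ∧ y.val < a'.val) := by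
      rintro ⟨hg1, hg2⟩
      apply crit y hg1 hg2
      rintro C₁ ⟨hC₁blk, hyC₁⟩ C₂ ⟨hC₂blk, hyC₂⟩
      have e1 : C₁ = N := D.le_antisymm C₁ hC₁blk N hNblk (hy C₁ hC₁blk hyC₁)
        (hNbot C₁ ⟨hC₁blk, y, hyC₁, hg1, hg2⟩)
      have e2 : C₂ = N := D.le_antisymm C₂ hC₂blk N hNblk (hy C₂ hC₂blk hyC₂)
        (hNbot C₂ ⟨hC₂blk, y, hyC₂, hg1, hg2⟩)
      rw [e1, e2]
    obtain ⟨hNblk', wN, hwN, hwN1, hwN2⟩ := id hNS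
    obtain ⟨αN, βN, hαβN, hNeq⟩ := block_icc (D.conn N hNblk) (D.nonempty N hNblk)
    have hy' : y ∈ Set.Icc αN βN := by rw [← hNeq]; exact hyN
    have hw' : wN ∈ Set.Icc αN βN := by rw [← hNeq]; exact hwN
    have ey1 : αN.val ≤ y.val := (Set.mem_Icc.1 hy').1
    have ey2 : y.val ≤ βN.val := (Set.mem_Icc.1 hy').2
    have ew1 : αN.val ≤ wN.val := (Set.mem_Icc.1 hw').1
    have ew2 : wN.val ≤ βN.val := (Set.mem_Icc.1 hw').2
    have hyB : y ∉ B := by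
      intro hyB
      exact (ne_B N hNS) (D.le_antisymm N hNblk B hBblk (hSB N hNS) (hy B hBblk hyB))
    have hyB' : y ∉ B' := by
      intro hyB'
      exact (ne_B' N hNS) (D.le_antisymm N hNblk B' hB'blk (hSB' N hNS) (hy B' hB'blk hyB'))
    rcases (by omega : y.val ≤ b.val ∨ a'.val ≤ y.val) with hc | hc
    · have hya : y.val < a.val := by
        by_contra hco
        exact hyB (by rw [hBeq]; exact Set.mem_Icc.2 ⟨Fin.le_def.2 (by omega), Fin.le_def.2 hc⟩)
      have hBN : B ⊆ N := by
        intro x hxB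
        rw [hBeq] at hxB
        obtain ⟨hx1, hx2⟩ := Set.mem_Icc.1 hxB
        have hx1' : a.val ≤ x.val := hx1
        have hx2' : x.val ≤ b.val := hx2
        rw [hNeq]; exact Set.mem_Icc.2 ⟨Fin.le_def.2 (by omega), Fin.le_def.2 (by omega)⟩
      obtain ⟨x₀, hx₀B, hx₀⟩ := D.min_exists B hBblk
      exact (ne_B N hNS) (D.le_antisymm N hNblk B hBblk (hSB N hNS)
        (hx₀ N hNblk (hBN hx₀B)))
    · have hyb' : b'.val < y.val := by
        by_contra hco
        exact hyB' (by rw [hB'eq]; exact Set.mem_Icc.2 ⟨Fin.le_def.2 hc, Fin.le_def.2 (by omega)⟩)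
      have hB'N : B' ⊆ N := by
        intro x hxB
        rw [hB'eq] at hxB
        obtain ⟨hx1, hx2⟩ := Set.mem_Icc.1 hxB
        have hx1' : a'.val ≤ x.val := hx1
        have hx2' : x.val ≤ b'.val := hx2
        rw [hNeq]; exact Set.mem_Icc.2 ⟨Fin.le_def.2 (by omega), Fin.le_def.2 (by omega)⟩
      obtain ⟨x₀, hx₀B', hx₀⟩ := D.min_exists B' hB'blk
      exact (ne_B' N hNS) (D.le_antisymm N hNblk B' hB'blk (hSB' N hNS)
        (hx₀ N hNblk (hB'N hx₀B')))
  · -- B is below M : M is above B and B'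
    have hB'M : D.le B' M := by
      rcases comp_B' M hMS with h | h
      · exact absurd (D.le_trans B hBblk M hMblk B' hB'blk hBM h) hnle
      · exact h
    obtain ⟨s', hs'M, hs'⟩ := D.min_exists M hMblk
    have hs'gap : ¬ (b.val < s'.val ∧ s'.val < a'.val) := by
      rintro ⟨hg1, hg2⟩
      apply crit s' hg1 hg2
      rintro C₁ ⟨hC₁blk, hyC₁⟩ C₂ ⟨hC₂blk, hyC₂⟩
      have e1 : C₁ = M := D.le_antisymm C₁ hC₁blk M hMblk
        (hMtop C₁ ⟨hC₁blk, s', hyC₁, hg1, hg2⟩) (hs' C₁ hC₁blk hyC₁)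
      have e2 : C₂ = M := D.le_antisymm C₂ hC₂blk M hMblk
        (hMtop C₂ ⟨hC₂blk, s', hyC₂, hg1, hg2⟩) (hs' C₂ hC₂blk hyC₂)
      rw [e1, e2]
    obtain ⟨hMblk', wM, hwM, hwM1, hwM2⟩ := id hMS
    obtain ⟨αM, βM, hαβM, hMeq⟩ := block_icc (D.conn M hMblk) (D.nonempty M hMblk)
    have hy' : s' ∈ Set.Icc αM βM := by rw [← hMeq]; exact hs'M
    have hw' : wM ∈ Set.Icc αM βM := by rw [← hMeq]; exact hwM
    have ey1 : αM.val ≤ s'.val := (Set.mem_Icc.1 hy').1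
    have ey2 : s'.val ≤ βM.val := (Set.mem_Icc.1 hy').2
    have ew1 : αM.val ≤ wM.val := (Set.mem_Icc.1 hw').1
    have ew2 : wM.val ≤ βM.val := (Set.mem_Icc.1 hw').2
    have hMneB : M ≠ B := ne_B M ⟨hMblk', wM, hwM, hwM1, hwM2⟩
    have hMneB' : M ≠ B' := ne_B' M ⟨hMblk', wM, hwM, hwM1, hwM2⟩
    have hs'B : s' ∉ B := by
      intro hmem
      exact hMneB (D.le_antisymm M hMblk B hBblk (hs' B hBblk hmem) hBM)
    have hs'B' : s' ∉ B' := by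
      intro hmem
      exact hMneB' (D.le_antisymm M hMblk B' hB'blk (hs' B' hB'blk hmem) hB'M)
    rcases (by omega : s'.val ≤ b.val ∨ a'.val ≤ s'.val) with hc | hc
    · have hya : s'.val < a.val := by
        by_contra hco
        exact hs'B (by rw [hBeq]; exact Set.mem_Icc.2 ⟨Fin.le_def.2 (by omega), Fin.le_def.2 hc⟩)
      have hBM' : B ⊆ M := by
        intro x hxB
        rw [hBeq] at hxB
        obtain ⟨hx1, hx2⟩ := Set.mem_Icc.1 hxB
        have hx1' : a.val ≤ x.val := hx1
        have hx2' : x.val ≤ b.val := hx2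
        rw [hMeq]; exact Set.mem_Icc.2 ⟨Fin.le_def.2 (by omega), Fin.le_def.2 (by omega)⟩
      obtain ⟨x₀, hx₀B, hx₀⟩ := D.max_exists B hBblk
      exact hMneB (D.le_antisymm M hMblk B hBblk (hx₀ M hMblk (hBM' hx₀B)) hBM)
    · have hyb' : b'.val < s'.val := by
        by_contra hco
        exact hs'B' (by rw [hB'eq]; exact Set.mem_Icc.2 ⟨Fin.le_def.2 hc, Fin.le_def.2 (by omega)⟩)
      have hB'M' : B' ⊆ M := by
        intro x hxB
        rw [hB'eq] at hxB
        obtain ⟨hx1, hx2⟩ := Set.mem_Icc.1 hxB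
        have hx1' : a'.val ≤ x.val := hx1
        have hx2' : x.val ≤ b'.val := hx2
        rw [hMeq]; exact Set.mem_Icc.2 ⟨Fin.le_def.2 (by omega), Fin.le_def.2 (by omega)⟩
      obtain ⟨x₀, hx₀B', hx₀⟩ := D.max_exists B' hB'blk
      exact hMneB' (D.le_antisymm M hMblk B' hB'blk (hx₀ M hMblk (hB'M' hx₀B')) hB'M)

open SimpleGraph in
private lemma no_badpair {n : ℕ} (D : StaircaseDiagram (pathGraph n))
    (h1 : D.FullySupported) (h2 : D.Elementary) : ∀ d : ℕ, ¬ BadPair D d := by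
  intro d
  induction d using Nat.strong_induction_on with
  | _ d ih => exact badpair_step D h1 h2 d ih

open SimpleGraph in
/-- every fully supported elementary staircase diagram over a path
graph is a chain. -/
theorem StaircaseDiagram.isChain_of_elementary_typeA {n : ℕ}
    (D : StaircaseDiagram (pathGraph n)) (h1 : D.FullySupported)
    (h2 : D.Elementary) : D.IsChainDiagram := by
  intro B hB B' hB'
  by_contra hcomp
  push_neg at hcomp
  obtain ⟨hn1, hn2⟩ := hcomp
  obtain ⟨a, b, hab, hBeq⟩ := block_icc (D.conn B hB) (D.nonempty B hB)
  obtain ⟨a', b', ha'b', hB'eq⟩ := block_icc (D.conn B' hB') (D.nonempty B' hB')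
  have hab' : a.val ≤ b.val := hab
  have ha'b'' : a'.val ≤ b'.val := ha'b'
  by_cases h : b.val < a'.val
  · exact no_badpair D h1 h2 (a'.val - b.val)
      ⟨B, B', a, b, a', b', hB, hB', hBeq, hB'eq, hab, ha'b', hn1, hn2, h, rfl⟩
  · by_cases h' : b'.val < a.val
    · exact no_badpair D h1 h2 (a.val - b'.val)
        ⟨B', B, a', b', a, b, hB', hB, hB'eq, hBeq, ha'b', hab, hn2, hn1, h', rfl⟩
    · -- the blocks overlap, so they share a vertex
      by_cases hord : a.val ≤ a'.val
      · have h1m : a' ∈ B := by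
          rw [hBeq]; exact Set.mem_Icc.2 ⟨Fin.le_def.2 (by omega), Fin.le_def.2 (by omega)⟩
        have h2m : a' ∈ B' := by rw [hB'eq]; exact Set.mem_Icc.2 ⟨le_rfl, ha'b'⟩
        rcases D.chain_vertex a' B hB B' hB' h1m h2m with hh | hh
        · exact hn1 hh
        · exact hn2 hh
      · have h1m : a ∈ B' := by
          rw [hB'eq]; exact Set.mem_Icc.2 ⟨Fin.le_def.2 (by omega), Fin.le_def.2 (by omega)⟩
        have h2m : a ∈ B := by rw [hBeq]; exact Set.mem_Icc.2 ⟨le_rfl, hab⟩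
        rcases D.chain_vertex a B hB B' hB' h2m h1m with hh | hh
        · exact hn1 hh
        · exact hn2 hh
end

section
/- The formal power series D_Z(t) = 11t³ + Σ_{n≥4} (-2C_{n-3} + 8Σ_{k=0}^{n-2}C_k) tⁿ equals -3t³ - 8t² + ((2t⁴ - 2t³ + 8t²)/(1-t))·Cat(t), where Cat(t) is the Catalan generating function. -/
open PowerSeries Finset

lemma inv_one_sub : ((1 : ℚ⟦X⟧) - X)⁻¹ = PowerSeries.mk (fun _ => (1:ℚ)) := by
  rw [PowerSeries.inv_eq_iff_mul_eq_one (by simp)]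
  symm
  ext n
  rw [mul_sub, mul_one]
  cases n with
  | zero => simp
  | succ m => simp [PowerSeries.coeff_succ_mul_X, map_sub]

lemma inv_mul_cat : ((1 : ℚ⟦X⟧) - X)⁻¹ * PowerSeries.mk (fun n => (catalan n : ℚ)) =
    PowerSeries.mk (fun n => ∑ k ∈ Finset.range (n+1), (catalan k : ℚ)) := by
  rw [inv_one_sub]
  ext n
  rw [PowerSeries.coeff_mul]
  simp only [coeff_mk, one_mul]
  rw [Finset.Nat.sum_antidiagonal_eq_sum_range_succ fun i j => (catalan j : ℚ)]
  exact Finset.sum_range_reflect (fun k => (catalan k : ℚ)) (n+1)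


/-- the series
`D_Z(t) = 11t³ + Σ_{n≥4} (-2C_{n-3} + 8Σ_{k=0}^{n-2} C_k) tⁿ` equals
`-3t³ - 8t² + ((2t⁴ - 2t³ + 8t²)/(1-t))·Cat(t)`. -/
theorem DZ_series_identity :
    (PowerSeries.mk (fun n => if n = 3 then (11 : ℚ) else if 4 ≤ n then
        -2 * catalan (n - 3) + 8 * ∑ k ∈ Finset.range (n - 1), (catalan k : ℚ)
      else 0)) =
    -3 * X ^ 3 - 8 * X ^ 2 +
      (2 * X ^ 4 - 2 * X ^ 3 + 8 * X ^ 2) * (1 - X)⁻¹ *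
        PowerSeries.mk (fun n => (catalan n : ℚ)) := by

  rw [mul_assoc, inv_mul_cat]
  set S : ℚ⟦X⟧ := PowerSeries.mk (fun n => ∑ k ∈ Finset.range (n+1), (catalan k : ℚ)) with hS
  have hre : -3 * X ^ 3 - 8 * X ^ 2 + (2 * X ^ 4 - 2 * X ^ 3 + 8 * X ^ 2) * S
      = (-3:ℚ) • ((X:ℚ⟦X⟧) ^ 3) + (-8:ℚ) • ((X:ℚ⟦X⟧)^2)
        + ((2:ℚ) • ((X:ℚ⟦X⟧)^4 * S) + (-2:ℚ) • ((X:ℚ⟦X⟧)^3*S) + (8:ℚ) • ((X:ℚ⟦X⟧)^2*S)) := by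
    simp only [PowerSeries.smul_eq_C_mul, map_neg, map_ofNat]
    ring
  rw [hre]
  ext n
  simp only [coeff_mk, map_add, map_smul, PowerSeries.coeff_X_pow_mul',
    PowerSeries.coeff_X_pow, smul_eq_mul, hS]
  rcases n with _|_|_|_|n
  · norm_num
  · norm_num
  · norm_num
  · norm_num [Finset.sum_range_succ, catalan_one]
  · have h4 : 4 ≤ n + 4 := by omega
    simp only [show n+4 ≠ 3 by omega, if_neg, if_pos h4, show n+4-3 = n+1 by omega,
      show n+4-1 = n+3 by omega, show (3:ℕ) ≤ n+4 by omega, show (2:ℕ) ≤ n+4 by omega,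
      show n+4-4 = n by omega, show n+4-2 = n+2 by omega, if_true]
    rw [if_neg (show ¬ n+1+1+1+1 = 2 by omega), if_neg not_false, if_neg not_false,
      show n+1+1 = n+2 from rfl, Finset.sum_range_succ (fun k => (catalan k : ℚ)) (n+1)]
    ring
end
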